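/- arXiv:1503.04245 — 2 statements merged into one kernel-verified Lean document; each statement's English description precedes it below -/
import Mathlib

section
/- For every natural number n, the sum over all parking functions f on [n] of the product ∏_{i=1}^{n} (m_i)!, where m_i = #f^{-1}(i), equals (2n)!/(n+1)!. -/
/-- A parking function on `[n] = {1, …, n}` (modeled by `Fin n`, with `i : Fin n`
representing the value `i + 1`). -/
def IsParkingFunction (n : ℕ) (f : Fin n → Fin n) : Prop :=
  ∀ k ∈ Finset.Icc 1 n, k ≤ (Finset.univ.filter fun i => (f i : ℕ) + 1 ≤ k).card

instance (n : ℕ) : DecidablePred (IsParkingFunction n) := fun f => by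
  unfold IsParkingFunction; infer_instance

/-- `m_i = #f⁻¹(i)`, the size of the fiber of `f` over `i`. -/
def fiberCard (n : ℕ) (f : Fin n → Fin n) (i : Fin n) : ℕ :=
  (Finset.univ.filter fun j => f j = i).card

/-!
A permutation `σ` satisfies `f ∘ σ = f` iff it permutes every fiber of `f`, so `∏ i, m_i!` is the
size of the stabilizer of `f` and the sum counts pairs `(f, σ)` with `f ∘ σ = f`. Sorting `f` turns
such a pair into the nondecreasing rearrangement `w` of `f` together with an arbitrary
permutation, so the sum is `n!` times the number of nondecreasing parking functions. These are the
`w` with `w k ≤ k`; placing the `k`-th up step at position `k + w k` identifies them with the Dyck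
words of semilength `n`, of which there are `catalan n = (2n)! / (n! (n + 1)!)`.
-/

open Finset DyckStep Equiv
open scoped Nat

variable {n : ℕ}

section Rearrangement

variable {α : Type*} [LinearOrder α]

theorem Tuple.comp_sort_eq_of_monotone_comp_perm {w : Fin n → α} (hw : Monotone w)
    (τ : Perm (Fin n)) : (w ∘ τ) ∘ Tuple.sort (w ∘ τ) = w := by
  have hτ : (w ∘ τ) ∘ ⇑τ⁻¹ = w := by ext; simp
  rw [Tuple.unique_monotone (Tuple.monotone_sort (w ∘ τ)) (hτ ▸ hw), hτ]

def stabilizerSigmaEquiv (P : (Fin n → α) → Prop)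
    (hP : ∀ f (σ : Perm (Fin n)), P (f ∘ σ) ↔ P f) :
    (Σ f : {f : Fin n → α // P f}, {σ : Perm (Fin n) // f.1 ∘ σ = f.1}) ≃
      {w : Fin n → α // Monotone w ∧ P w} × Perm (Fin n) where
  toFun x := (⟨x.1.1 ∘ Tuple.sort x.1.1, Tuple.monotone_sort _, (hP _ _).2 x.1.2⟩,
    (Tuple.sort x.1.1)⁻¹ * x.2.1)
  invFun y := ⟨⟨y.1.1 ∘ y.2, (hP _ _).2 y.1.2.2⟩, Tuple.sort (y.1.1 ∘ y.2) * y.2, by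
    rw [Perm.coe_mul, ← Function.comp_assoc,
      Tuple.comp_sort_eq_of_monotone_comp_perm y.1.2.1]⟩
  left_inv := by
    rintro ⟨⟨f, -⟩, σ, hσ⟩
    have hf : (f ∘ Tuple.sort f) ∘ ⇑((Tuple.sort f)⁻¹ * σ) = f := by
      ext i; simpa using congrFun hσ i
    exact Sigma.subtype_ext (Subtype.ext hf) (by simp only [hf, mul_inv_cancel_left])
  right_inv := by
    rintro ⟨⟨w, hw, -⟩, τ⟩
    simp only [Tuple.comp_sort_eq_of_monotone_comp_perm hw, inv_mul_cancel_left]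

theorem sum_prod_factorial_card_fiber [Fintype α] [DecidableEq α]
    (P : (Fin n → α) → Prop) [DecidablePred P]
    (hP : ∀ f (σ : Perm (Fin n)), P (f ∘ σ) ↔ P f) :
    ∑ f : {f : Fin n → α // P f}, ∏ a, (#{i | f.1 i = a})! =
      Nat.card {w : Fin n → α // Monotone w ∧ P w} * n ! := by
  calc ∑ f : {f : Fin n → α // P f}, ∏ a, (#{i | f.1 i = a})!
      = ∑ f : {f : Fin n → α // P f}, Nat.card {σ : Perm (Fin n) // f.1 ∘ σ = f.1} := by
        refine sum_congr rfl fun f _ => ?_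
        rw [Nat.card_eq_fintype_card, DomMulAct.stabilizer_card]
        simp only [Fintype.card_subtype]
    _ = Nat.card (Σ f : {f : Fin n → α // P f}, {σ : Perm (Fin n) // f.1 ∘ σ = f.1}) := by
        simp only [Nat.card_sigma]
    _ = Nat.card {w : Fin n → α // Monotone w ∧ P w} * n ! := by
        rw [Nat.card_congr (stabilizerSigmaEquiv P hP), Nat.card_prod, Nat.card_perm,
          Nat.card_fin]

end Rearrangement

lemma isParkingFunction_iff (f : Fin n → Fin n) :
    IsParkingFunction n f ↔ ∀ j : Fin n, (j : ℕ) < #{i | f i ≤ j} := by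
  have hfilter (j : Fin n) : #{i | (f i : ℕ) + 1 ≤ j + 1} = #{i | f i ≤ j} := by
    simp only [Nat.add_le_add_iff_right, Fin.le_def]
  constructor
  · intro h j
    rw [← hfilter]
    exact h (j + 1) (mem_Icc.2 ⟨by omega, j.isLt⟩)
  · intro h K hK
    obtain ⟨hK1, hKn⟩ := mem_Icc.1 hK
    obtain ⟨j, rfl⟩ : ∃ j : Fin n, K = j + 1 := ⟨⟨K - 1, by omega⟩, by simp; omega⟩
    rw [hfilter]
    exact h j

lemma isParkingFunction_comp_perm (f : Fin n → Fin n) (σ : Perm (Fin n)) :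
    IsParkingFunction n (f ∘ σ) ↔ IsParkingFunction n f := by
  simp only [isParkingFunction_iff, Function.comp_apply]
  refine forall_congr' fun j => ?_
  rw [card_equiv σ (t := {i | f i ≤ j}) (by simp)]

lemma Monotone.isParkingFunction_iff {w : Fin n → Fin n} (hw : Monotone w) :
    IsParkingFunction n w ↔ ∀ k, w k ≤ k := by
  simp only [_root_.isParkingFunction_iff, Tuple.lt_card_le_iff_apply_le_of_monotone hw]

def stepsWithUpAt (N : ℕ) (S : Finset ℕ) : List DyckStep :=
  (List.range N).map fun j => if j ∈ S then U else D

def upSteps (l : List DyckStep) : Finset ℕ := {j ∈ range l.length | l[j]? = some U}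

@[simp]
lemma length_stepsWithUpAt (N : ℕ) (S : Finset ℕ) : (stepsWithUpAt N S).length = N := by
  simp [stepsWithUpAt]

lemma stepsWithUpAt_upSteps (l : List DyckStep) : stepsWithUpAt l.length (upSteps l) = l := by
  refine List.ext_getElem (by simp) fun j hj _ => ?_
  rcases (l[j]'(by simpa using hj)).dichotomy with h | h <;>
    simp_all [stepsWithUpAt, upSteps]

lemma upSteps_stepsWithUpAt {N : ℕ} {S : Finset ℕ} (hS : S ⊆ range N) :
    upSteps (stepsWithUpAt N S) = S := by
  ext j
  by_cases hj : j < N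
  · by_cases h : j ∈ S <;> simp [upSteps, stepsWithUpAt, hj, h]
  · simp only [upSteps, length_stepsWithUpAt, mem_filter, mem_range, hj, false_and, false_iff]
    exact fun h => hj (mem_range.1 (hS h))

lemma count_U_take_stepsWithUpAt (N : ℕ) (S : Finset ℕ) (i : ℕ) :
    ((stepsWithUpAt N S).take i).count U = #{j ∈ S | j < min i N} := by
  rw [stepsWithUpAt, ← List.map_take, List.take_range, List.count, List.countP_map,
    List.countP_eq_length_filter]
  have h : #{j ∈ S | j < min i N} = #{j ∈ range (min i N) | (if j ∈ S then U else D) = U} := by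
    congr 1
    ext j; by_cases h : j ∈ S <;> simp [h, and_comm]
  rw [h]
  -- `Finset.range m` is `List.range m` underneath, so both sides are the same list length
  rfl

lemma count_U_add_count_D (l : List DyckStep) : l.count U + l.count D = l.length := by
  induction l with
  | nil => rfl
  | cons s l ih => cases s <;> simp [← ih] <;> omega

lemma count_U_take_stepsWithUpAt_image {e : Fin n → ℕ} (he : Function.Injective e)
    (N i : ℕ) : ((stepsWithUpAt N (univ.image e)).take i).count U = #{k | e k < min i N} := by
  rw [count_U_take_stepsWithUpAt, filter_image, card_image_of_injective _ he]

lemma count_D_take_stepsWithUpAt_image {e : Fin n → ℕ} (he : Function.Injective e)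
    (N i : ℕ) :
    ((stepsWithUpAt N (univ.image e)).take i).count D = min i N - #{k | e k < min i N} := by
  have h := count_U_add_count_D ((stepsWithUpAt N (univ.image e)).take i)
  rw [count_U_take_stepsWithUpAt_image he, List.length_take, length_stepsWithUpAt] at h
  omega

lemma half_le_card_apply_lt {e : Fin n → ℕ} (hle : ∀ k, e k ≤ 2 * k) {m : ℕ}
    (hm : m ≤ 2 * n) :
    (m + 1) / 2 ≤ #{k | e k < m} := by
  calc (m + 1) / 2 = #{k : Fin n | (k : ℕ) < (m + 1) / 2} := by
        rw [Fin.card_filter_val_lt]; omega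
    _ ≤ #{k | e k < m} := card_le_card fun k hk => by
        simp only [mem_filter, mem_univ, true_and] at hk ⊢
        have := hle k
        omega

lemma card_filter_apply_lt_two_mul {e : Fin n → ℕ} (hle : ∀ k, e k ≤ 2 * k) :
    #{k | e k < 2 * n} = n := by
  rw [filter_true_of_mem fun k _ => by have := hle k; omega, card_univ, Fintype.card_fin]

lemma count_stepsWithUpAt_image {e : Fin n → ℕ} (he : Function.Injective e)
    (hle : ∀ k, e k ≤ 2 * k) (s : DyckStep) :
    (stepsWithUpAt (2 * n) (univ.image e)).count s = n := by
  rw [← List.take_length (l := stepsWithUpAt _ _)]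
  cases s
  · rw [count_U_take_stepsWithUpAt_image he, length_stepsWithUpAt, min_self,
      card_filter_apply_lt_two_mul hle]
  · rw [count_D_take_stepsWithUpAt_image he, length_stepsWithUpAt, min_self,
      card_filter_apply_lt_two_mul hle]
    omega

/-- `e k ≤ 2 * k` says that the `e k - k` down steps before the `k`-th up step do not outnumber
the `k` up steps. -/
def dyckWordOfUpPositions (e : Fin n → ℕ) (he : StrictMono e) (hle : ∀ k, e k ≤ 2 * k) :
    DyckWord where
  toList := stepsWithUpAt (2 * n) (univ.image e)
  count_U_eq_count_D := by
    rw [count_stepsWithUpAt_image he.injective hle, count_stepsWithUpAt_image he.injective hle]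
  count_D_le_count_U i := by
    rw [count_U_take_stepsWithUpAt_image he.injective,
      count_D_take_stepsWithUpAt_image he.injective]
    have := half_le_card_apply_lt hle (min_le_right i (2 * n))
    omega

lemma toList_dyckWordOfUpPositions {e : Fin n → ℕ} (he : StrictMono e)
    (hle : ∀ k, e k ≤ 2 * k) :
    (dyckWordOfUpPositions e he hle).toList = stepsWithUpAt (2 * n) (univ.image e) := rfl

lemma semilength_dyckWordOfUpPositions {e : Fin n → ℕ} (he : StrictMono e)
    (hle : ∀ k, e k ≤ 2 * k) :
    (dyckWordOfUpPositions e he hle).semilength = n :=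
  count_stepsWithUpAt_image he.injective hle U

lemma upSteps_subset_range (l : List DyckStep) : upSteps l ⊆ range l.length := filter_subset _ _

lemma count_U_eq_card_upSteps (l : List DyckStep) : l.count U = #(upSteps l) := by
  have h := count_U_take_stepsWithUpAt l.length (upSteps l) l.length
  rwa [stepsWithUpAt_upSteps, List.take_length, min_self,
    filter_true_of_mem fun j hj => mem_range.1 (upSteps_subset_range l hj)] at h

lemma orderEmbOfFin_upSteps_le_two_mul (p : DyckWord) (h : #(upSteps p.toList) = n)
    (k : Fin n) :
    (upSteps p.toList).orderEmbOfFin h k ≤ 2 * k := by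
  set e := (upSteps p.toList).orderEmbOfFin h
  have hp : stepsWithUpAt p.toList.length (univ.image e) = p.toList := by
    rw [image_orderEmbOfFin_univ, stepsWithUpAt_upSteps]
  have hlt : e k < p.toList.length :=
    mem_range.1 (upSteps_subset_range _ (orderEmbOfFin_mem _ h k))
  have hk : #{k' | e k' < min (e k) p.toList.length} = k := by
    simp only [min_eq_left hlt.le, e.lt_iff_lt, filter_gt_eq_Iio, Fin.card_Iio]
  have hU := count_U_take_stepsWithUpAt_image e.injective p.toList.length (e k)
  have hD := count_D_take_stepsWithUpAt_image e.injective p.toList.length (e k)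
  rw [hp, hk] at hU hD
  have := p.count_D_le_count_U (e k)
  omega

def upPositionsEquivDyckWord (n : ℕ) :
    {e : Fin n → ℕ // StrictMono e ∧ ∀ k, e k ≤ 2 * k} ≃ {p : DyckWord // p.semilength = n} where
  toFun e :=
    ⟨dyckWordOfUpPositions e.1 e.2.1 e.2.2, semilength_dyckWordOfUpPositions e.2.1 e.2.2⟩
  invFun p :=
    have h : #(upSteps p.1.toList) = n := by rw [← count_U_eq_card_upSteps]; exact p.2
    ⟨(upSteps p.1.toList).orderEmbOfFin h, (orderEmbOfFin _ h).strictMono,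
      orderEmbOfFin_upSteps_le_two_mul p.1 h⟩
  left_inv := by
    rintro ⟨e, he, hle⟩
    have hsub : univ.image e ⊆ range (2 * n) := by
      intro j hj
      obtain ⟨k, -, rfl⟩ := mem_image.1 hj
      have := hle k
      exact mem_range.2 (by omega)
    refine Subtype.ext (orderEmbOfFin_unique _ (fun k => ?_) he).symm
    rw [toList_dyckWordOfUpPositions, upSteps_stepsWithUpAt hsub]
    exact mem_image_of_mem _ (mem_univ k)
  right_inv := by
    rintro ⟨p, rfl⟩
    refine Subtype.ext (DyckWord.ext ?_)
    rw [toList_dyckWordOfUpPositions, image_orderEmbOfFin_univ,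
      DyckWord.two_mul_semilength_eq_length, stepsWithUpAt_upSteps]

lemma StrictMono.val_sub_le_apply_sub {e : Fin n → ℕ} (he : StrictMono e) (a b : Fin n) :
    (b : ℕ) - a ≤ e b - e a :=
  calc (b : ℕ) - a = #(Ico a b) := (Fin.card_Ico a b).symm
    _ = #((Ico a b).image e) := (card_image_of_injective _ he.injective).symm
    _ ≤ #(Ico (e a) (e b)) := card_le_card fun x hx => by
        obtain ⟨c, hc, rfl⟩ := mem_image.1 hx
        obtain ⟨hac, hcb⟩ := mem_Ico.1 hc
        exact mem_Ico.2 ⟨he.monotone hac, he hcb⟩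
    _ = e b - e a := Nat.card_Ico _ _

lemma StrictMono.val_le_apply {e : Fin n → ℕ} (he : StrictMono e) (k : Fin n) :
    (k : ℕ) ≤ e k := by
  simpa using he.val_sub_le_apply_sub ⟨0, k.pos⟩ k |>.trans (Nat.sub_le _ _)

def monotoneLeSelfEquivUpPositions (n : ℕ) :
    {w : Fin n → Fin n // Monotone w ∧ ∀ k, w k ≤ k} ≃
      {e : Fin n → ℕ // StrictMono e ∧ ∀ k, e k ≤ 2 * k} where
  toFun w := ⟨fun k => k + w.1 k,
    Fin.val_strictMono.add_monotone (Fin.val_strictMono.monotone.comp w.2.1),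
    fun k => by have := Fin.le_def.1 (w.2.2 k); dsimp only; omega⟩
  invFun e := ⟨fun k => ⟨e.1 k - k, by have := e.2.2 k; omega⟩, fun a b hab => by
      have := e.2.1.val_sub_le_apply_sub a b
      have := e.2.1.val_le_apply a
      have := e.2.1.monotone hab
      rw [Fin.le_def]; dsimp only; omega,
    fun k => by rw [Fin.le_def]; have := e.2.2 k; dsimp only; omega⟩
  left_inv w := by ext; simp
  right_inv e := by ext k; have := e.2.1.val_le_apply k; simp; omega

theorem card_monotone_isParkingFunction (n : ℕ) :
    Nat.card {w : Fin n → Fin n // Monotone w ∧ IsParkingFunction n w} = catalan n := by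
  rw [Nat.card_congr (subtypeEquivRight fun w => and_congr_right Monotone.isParkingFunction_iff),
    Nat.card_congr ((monotoneLeSelfEquivUpPositions n).trans (upPositionsEquivDyckWord n)),
    Nat.card_eq_fintype_card, DyckWord.card_dyckWord_semilength_eq_catalan]

theorem catalan_mul_factorial_mul_factorial_succ (n : ℕ) :
    catalan n * n ! * (n + 1)! = (2 * n)! := by
  have h := Nat.choose_mul_factorial_mul_factorial (n := 2 * n) (k := n) (by omega)
  rw [show 2 * n - n = n by omega, ← Nat.centralBinom_eq_two_mul_choose,
    ← succ_mul_catalan_eq_centralBinom] at h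
  rw [Nat.factorial_succ, ← h]
  ring

/-- `Σ_{f parking function on [n]} Π_i (m_i)! = (2n)! / (n+1)!`. -/
theorem sum_parkingFunctions_prod_factorial_fibers (n : ℕ) :
    ((∑ f : {f : Fin n → Fin n // IsParkingFunction n f},
        ∏ i : Fin n, (fiberCard n f.1 i).factorial : ℕ) : ℚ) =
    ((2 * n).factorial : ℚ) / ((n + 1).factorial : ℚ) := by
  have hsum : ∑ f : {f : Fin n → Fin n // IsParkingFunction n f},
      ∏ i : Fin n, (fiberCard n f.1 i)! = catalan n * n ! := by
    simp only [fiberCard]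
    rw [sum_prod_factorial_card_fiber _ isParkingFunction_comp_perm,
      card_monotone_isParkingFunction]
  rw [hsum, eq_div_iff (by positivity), ← catalan_mul_factorial_mul_factorial_succ]
  norm_cast
end

section
/- The formal power series s(t) = Σ_{n≥0} 2^n·(n+1)^(n-1) · t^n/n! (with the n = 0 term equal to 1) satisfies the functional equation s(t) = exp(2t·s(t)) in ℚ[[t]]. (Its coefficients count parking-like structures over the subsets species, i.e., pairs consisting of a parking function on [n] together with a subset of [n].) -/
open PowerSeries

/-- Composition `F(g)` of formal power series, valid (i.e., agreeing with the usual
substitution) whenever the constant term of `g` is zero. -/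
noncomputable def seriesComp (F g : PowerSeries ℚ) : PowerSeries ℚ :=
  PowerSeries.mk fun n =>
    PowerSeries.coeff n (∑ k ∈ Finset.range (n + 1), PowerSeries.coeff k F • g ^ k)

/-- `s(t) = Σ_{n ≥ 0} 2^n · (n+1)^(n-1) · t^n / n!` (with constant term 1),
the EGF of parking-like structures over the subsets species. -/
noncomputable def subsetsParkingEGF : PowerSeries ℚ :=
  PowerSeries.mk fun n => (2 ^ n * (n + 1) ^ (n - 1) : ℕ) / (n.factorial : ℚ)

/-!
Put `A_x(t) = Σₘ x (x + m) ^ (m - 1) tᵐ / m!`. Abel's identity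
`Σᵢ C(m, i) x (x + i) ^ (i - 1) (z - x - i) ^ (m - i) = z ^ m` follows by expanding in powers
of `z`: the coefficient of `zʲ` with `j < m` is an `(m - j)`-th finite difference of a
polynomial of degree `m - j - 1`, hence zero. It makes the Abel polynomials a sequence of binomial type, i.e.
`A_{x+y} = A_x A_y`, so `A_k = A_1 ^ k` has explicit coefficients. Feeding them into
`exp (x t A_1) = Σ_k xᵏ tᵏ A_k / k!` and summing with the binomial theorem gives
`exp (x t A_1) = A_x`. Finally `s(t) = A_1(2t)`, so the theorem is the case `x = 1` rescaled by `2`.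
-/

open Finset

lemma Nat.choose_mul_choose_sub_comm (m i j : ℕ) :
    m.choose i * (m - i).choose j = m.choose j * (m - j).choose i := by
  by_cases hij : i + j ≤ m
  · have hi := Nat.choose_mul (n := m) (Nat.le_add_right i j)
    have hj := Nat.choose_mul (n := m) (Nat.le_add_left j i)
    rw [Nat.add_sub_cancel_left, Nat.choose_symm_add] at hi
    rw [Nat.add_sub_cancel] at hj
    rw [← hi, ← hj]
  · have hl : m.choose i * (m - i).choose j = 0 := by
      rw [Nat.mul_eq_zero, Nat.choose_eq_zero_iff, Nat.choose_eq_zero_iff]; omega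
    have hr : m.choose j * (m - j).choose i = 0 := by
      rw [Nat.mul_eq_zero, Nat.choose_eq_zero_iff, Nat.choose_eq_zero_iff]; omega
    rw [hl, hr]

section AbelPoly

variable {R : Type*} [CommRing R]

/-- `x (x + m) ^ (m - 1)`, written so that it also takes the right value `1` at `m = 0`. -/
def abelPoly (x : R) (m : ℕ) : R :=
  (x + m) ^ m - m * (x + m) ^ (m - 1)

@[simp]
lemma abelPoly_zero_right (x : R) : abelPoly x 0 = 1 := by
  simp [abelPoly]

lemma abelPoly_succ (x : R) (n : ℕ) : abelPoly x (n + 1) = x * (x + n + 1) ^ n := by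
  simp only [abelPoly, Nat.add_sub_cancel, pow_succ, Nat.cast_add, Nat.cast_one]
  ring

lemma abelPoly_zero_left (m : ℕ) : abelPoly (0 : R) m = if m = 0 then 1 else 0 := by
  cases m <;> simp [abelPoly_succ]

lemma abelPoly_mul_pow (x : R) {i N : ℕ} (hi : i ≤ N) (hN : 1 ≤ N) :
    abelPoly x i * (x + i) ^ (N - i) = x * (x + i) ^ (N - 1) := by
  cases i with
  | zero => rw [abelPoly_zero_right, one_mul, Nat.cast_zero, add_zero, ← pow_succ',
      Nat.sub_add_cancel hN, Nat.sub_zero]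
  | succ i =>
    rw [abelPoly_succ, mul_assoc, Nat.cast_succ, ← add_assoc, ← pow_add]
    congr 2
    omega

lemma sum_neg_one_pow_mul_choose_mul_pow_eq_zero (x : R) {j N : ℕ} (h : j < N) :
    ∑ k ∈ range (N + 1), (-1) ^ (N - k) * (N.choose k : R) * (x + k) ^ j = 0 := by
  have hshift := fwdDiff_iter_eq_sum_shift (h := (1 : R)) (fun r : R ↦ r ^ j) N x
  rw [fwdDiff_iter_pow_eq_zero_of_lt h] at hshift
  simpa [zsmul_eq_mul] using hshift.symm

lemma sum_choose_mul_abelPoly_mul_neg_pow_eq_zero (x : R) {N : ℕ} (hN : 1 ≤ N) :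
    ∑ i ∈ range (N + 1), (N.choose i : R) * abelPoly x i * (-(x + i)) ^ (N - i) = 0 := by
  calc _ = x * ∑ i ∈ range (N + 1), (-1) ^ (N - i) * (N.choose i : R) * (x + i) ^ (N - 1) := by
        rw [mul_sum]
        refine sum_congr rfl fun i hi ↦ ?_
        have key := abelPoly_mul_pow x (Nat.lt_succ_iff.mp (mem_range.mp hi)) hN
        rw [neg_pow]
        linear_combination (-1) ^ (N - i) * (N.choose i : R) * key
    _ = 0 := by
      rw [sum_neg_one_pow_mul_choose_mul_pow_eq_zero x (Nat.sub_lt hN one_pos), mul_zero]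

theorem sum_choose_mul_abelPoly_mul_sub_pow (x z : R) (m : ℕ) :
    ∑ i ∈ range (m + 1), (m.choose i : R) * abelPoly x i * (z - (x + i)) ^ (m - i) = z ^ m := by
  calc _ = ∑ i ∈ range (m + 1), ∑ j ∈ range (m - i + 1),
          ((m.choose i * (m - i).choose j : ℕ) : R) * z ^ j
            * (abelPoly x i * (-(x + i)) ^ (m - i - j)) := by
        refine sum_congr rfl fun i _ ↦ ?_
        rw [sub_eq_add_neg, add_pow, mul_sum]
        refine sum_congr rfl fun j _ ↦ ?_
        push_cast
        ring
    _ = ∑ j ∈ range (m + 1), ∑ i ∈ range (m - j + 1),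
          ((m.choose i * (m - i).choose j : ℕ) : R) * z ^ j
            * (abelPoly x i * (-(x + i)) ^ (m - i - j)) :=
        sum_comm' fun i j ↦ by simp only [mem_range]; omega
    _ = ∑ j ∈ range (m + 1), (m.choose j : R) * z ^ j * ∑ i ∈ range (m - j + 1),
          ((m - j).choose i : R) * abelPoly x i * (-(x + i)) ^ (m - j - i) := by
        refine sum_congr rfl fun j _ ↦ ?_
        rw [mul_sum]
        refine sum_congr rfl fun i _ ↦ ?_
        rw [Nat.choose_mul_choose_sub_comm, Nat.sub_right_comm]
        push_cast
        ring
    _ = z ^ m := by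
        rw [sum_range_succ, sum_eq_zero fun j hj ↦ ?_]
        · simp
        · rw [sum_choose_mul_abelPoly_mul_neg_pow_eq_zero x (by have := mem_range.mp hj; omega),
            mul_zero]

lemma sum_range_choose_mul_sub_mul (m : ℕ) (f : ℕ → R) :
    ∑ i ∈ range (m + 1), (m.choose i : R) * ((m - i : ℕ) : R) * f i
      = m * ∑ i ∈ range m, ((m - 1).choose i : R) * f i := by
  cases m with
  | zero => simp
  | succ n =>
    rw [sum_range_succ, Nat.sub_self, Nat.cast_zero, mul_zero, zero_mul, add_zero, mul_sum,
      Nat.add_sub_cancel]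
    refine sum_congr rfl fun i _ ↦ ?_
    have h : ((n.choose i * (n + 1) : ℕ) : R) = (((n + 1).choose i * (n + 1 - i) : ℕ) : R) :=
      congrArg _ (Nat.choose_mul_succ_eq n i)
    push_cast at h
    rw [← h]
    push_cast
    ring

theorem abelPoly_add (x y : R) (m : ℕ) :
    abelPoly (x + y) m
      = ∑ p ∈ antidiagonal m, (m.choose p.1 : R) * abelPoly x p.1 * abelPoly y p.2 := by
  set z := x + y + m
  have hz : ∀ i ∈ range (m + 1), y + ((m - i : ℕ) : R) = z - (x + i) := fun i hi ↦ by
    rw [Nat.cast_sub (Nat.lt_succ_iff.mp (mem_range.mp hi))]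
    ring
  have habel_pred : (m : R) * ∑ i ∈ range m,
      ((m - 1).choose i : R) * (abelPoly x i * (z - (x + i)) ^ (m - 1 - i)) = m * z ^ (m - 1) := by
    cases m with
    | zero => simp
    | succ n => simp_rw [Nat.add_sub_cancel, ← mul_assoc, sum_choose_mul_abelPoly_mul_sub_pow]
  rw [Nat.sum_antidiagonal_eq_sum_range_succ_mk]
  calc abelPoly (x + y) m = z ^ m - m * z ^ (m - 1) := rfl
    _ = ∑ i ∈ range (m + 1), (m.choose i : R) * abelPoly x i * (z - (x + i)) ^ (m - i)
        - ∑ i ∈ range (m + 1), (m.choose i : R) * ((m - i : ℕ) : R)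
            * (abelPoly x i * (z - (x + i)) ^ (m - 1 - i)) := by
      rw [sum_choose_mul_abelPoly_mul_sub_pow, sum_range_choose_mul_sub_mul, habel_pred]
    _ = _ := by
      rw [← sum_sub_distrib]
      refine sum_congr rfl fun i hi ↦ ?_
      dsimp only
      rw [abelPoly.eq_1 y, hz i hi, Nat.sub_right_comm]
      ring

lemma sum_choose_mul_pow_mul_abelPoly_sub (x : R) (n : ℕ) :
    ∑ k ∈ range (n + 1), (n.choose k : R) * x ^ k * abelPoly (k : R) (n - k)
      = abelPoly x n := by
  calc _ = ∑ k ∈ range (n + 1), (n.choose k : R) * x ^ k * (n : R) ^ (n - k)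
        - ∑ k ∈ range (n + 1), (n.choose k : R) * ((n - k : ℕ) : R)
            * (x ^ k * (n : R) ^ (n - 1 - k)) := by
        rw [← sum_sub_distrib]
        refine sum_congr rfl fun k hk ↦ ?_
        have hkn : (k : R) + ((n - k : ℕ) : R) = n := by
          rw [Nat.cast_sub (Nat.lt_succ_iff.mp (mem_range.mp hk))]
          ring
        rw [abelPoly, hkn, Nat.sub_right_comm]
        ring
    _ = (x + n) ^ n - n * (x + n) ^ (n - 1) := by
        rw [sum_range_choose_mul_sub_mul, add_pow]
        congr 1
        · exact sum_congr rfl fun k _ ↦ by ring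
        · cases n with
          | zero => simp
          | succ n =>
            rw [add_pow, Nat.add_sub_cancel]
            exact congrArg _ (sum_congr rfl fun k _ ↦ by ring)
    _ = abelPoly x n := rfl

lemma abelPoly_one (n : ℕ) : abelPoly (1 : R) n = (n + 1) ^ (n - 1) := by
  cases n with
  | zero => simp
  | succ n =>
    rw [abelPoly_succ, one_mul, Nat.add_sub_cancel]
    push_cast
    ring

end AbelPoly

section AbelSeries

variable {K : Type*} [Field K]

noncomputable def abelSeries (x : K) : PowerSeries K :=
  mk fun m ↦ abelPoly x m / m.factorial

lemma coeff_abelSeries (x : K) (m : ℕ) : coeff m (abelSeries x) = abelPoly x m / m.factorial :=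
  coeff_mk _ _

theorem abelSeries_add [CharZero K] (x y : K) :
    abelSeries (x + y) = abelSeries x * abelSeries y := by
  ext m
  rw [coeff_mul, coeff_abelSeries, abelPoly_add, sum_div]
  refine sum_congr rfl fun p hp ↦ ?_
  obtain ⟨i, j⟩ := p
  rw [Finset.HasAntidiagonal.mem_antidiagonal] at hp
  subst hp
  rw [coeff_abelSeries, coeff_abelSeries, Nat.cast_choose K (Nat.le_add_right i j),
    Nat.add_sub_cancel_left]
  have hfac : ((i + j).factorial : K) ≠ 0 := Nat.cast_ne_zero.mpr (Nat.factorial_ne_zero _)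
  field_simp

lemma abelSeries_zero : abelSeries (0 : K) = 1 := by
  ext m
  rw [coeff_abelSeries, abelPoly_zero_left, coeff_one]
  split_ifs with hm <;> simp [hm]

lemma abelSeries_natCast [CharZero K] (k : ℕ) : abelSeries (k : K) = abelSeries 1 ^ k := by
  induction k with
  | zero => rw [Nat.cast_zero, abelSeries_zero, pow_zero]
  | succ k ih => rw [Nat.cast_succ, abelSeries_add, ih, pow_succ]

end AbelSeries

lemma coeff_seriesComp (F g : PowerSeries ℚ) (n : ℕ) :
    coeff n (seriesComp F g) = ∑ k ∈ range (n + 1), coeff k F * coeff n (g ^ k) := by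
  simp [seriesComp, map_sum]

lemma seriesComp_rescale (F g : PowerSeries ℚ) (a : ℚ) :
    seriesComp F (rescale a g) = rescale a (seriesComp F g) := by
  ext n
  simp only [coeff_seriesComp, coeff_rescale, ← map_pow, mul_sum]
  exact sum_congr rfl fun k _ ↦ by ring

theorem seriesComp_exp_C_mul_X_mul_abelSeries_one (x : ℚ) :
    seriesComp (exp ℚ) (C x * X * abelSeries 1) = abelSeries x := by
  ext n
  rw [coeff_seriesComp, coeff_abelSeries, ← sum_choose_mul_pow_mul_abelPoly_sub, sum_div]
  refine sum_congr rfl fun k hk ↦ ?_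
  have hkn : k ≤ n := Nat.lt_succ_iff.mp (mem_range.mp hk)
  rw [mul_pow, mul_pow, ← map_pow, mul_assoc, coeff_C_mul, coeff_X_pow_mul', if_pos hkn,
    ← abelSeries_natCast, coeff_abelSeries, coeff_exp, Algebra.algebraMap_self, RingHom.id_apply,
    Nat.cast_choose ℚ hkn]
  field_simp

lemma subsetsParkingEGF_eq_rescale : subsetsParkingEGF = rescale 2 (abelSeries 1) := by
  ext n
  rw [subsetsParkingEGF, coeff_mk, coeff_rescale, coeff_abelSeries, abelPoly_one]
  push_cast
  ring

/-- `s(t) = exp (2t · s(t))` in `ℚ⟦t⟧`. -/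
theorem subsetsParkingEGF_eq_exp_comp :
    subsetsParkingEGF =
      seriesComp (PowerSeries.exp ℚ) (2 * PowerSeries.X * subsetsParkingEGF) := by
  have h2X : 2 * X * rescale 2 (abelSeries 1) = rescale (2 : ℚ) (X * abelSeries 1) := by
    rw [map_mul, rescale_X, map_ofNat]
  rw [subsetsParkingEGF_eq_rescale, h2X, seriesComp_rescale, ← one_mul X, ← map_one C,
    seriesComp_exp_C_mul_X_mul_abelSeries_one]
end
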